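/- Let x_1, …, x_m be unit vectors in ℝ^d with |x_i·x_j| ≤ √(2·log(2m²/δ)/d) for all i ≠ j, for some δ ∈ (0,1), let y_i ∈ {−1,+1}, and assume d ≥ 16·m⁴·n⁴·log(2m²/δ). Let θ = (w_j, b_j)_{j=1}^n be a KKT point (with multipliers λ_i) of the margin-maximization problem for the fixed-output-weight network, and suppose ∑_{j=1}^{n/2} b_j − ∑_{j=n/2+1}^{n} b_j ≤ 1/4. Then λ_i ≤ 5/2 for every i with y_i = −1. -/

import Mathlib

/-- ReLU. -/
noncomputable def relu (z : ℝ) : ℝ := max z 0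

/-- Fixed output weights: +1 for the first n/2 neurons, -1 for the rest. -/
def vsign (n : ℕ) (j : Fin n) : ℝ := if (j : ℕ) < n / 2 then 1 else -1

/-- 2-layer ReLU network on ℝ^d with fixed output weights ±1. -/
noncomputable def netF {d n : ℕ} (w : Fin n → EuclideanSpace ℝ (Fin d)) (b : Fin n → ℝ)
    (x : EuclideanSpace ℝ (Fin d)) : ℝ :=
  ∑ j, vsign n j * relu ((inner ℝ (w j) x : ℝ) + b j)

/-- KKT point (with multipliers `lam`) of the margin-maximization problem for the
fixed-output-weight network. -/
def IsKKTFixWith {d m n : ℕ} (x : Fin m → EuclideanSpace ℝ (Fin d)) (y : Fin m → ℝ)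
    (w : Fin n → EuclideanSpace ℝ (Fin d)) (b : Fin n → ℝ) (lam : Fin m → ℝ) : Prop :=
  (∀ i, 1 ≤ y i * netF w b (x i)) ∧
  (∀ i, 0 ≤ lam i) ∧
  ∃ s : Fin m → Fin n → ℝ,
    (∀ i j, s i j ∈ Set.Icc (0 : ℝ) 1) ∧
    (∀ i j, 0 < (inner ℝ (w j) (x i) : ℝ) + b j → s i j = 1) ∧
    (∀ i j, (inner ℝ (w j) (x i) : ℝ) + b j < 0 → s i j = 0) ∧
    (∀ j, w j = vsign n j • ∑ i, (lam i * y i * s i j) • x i) ∧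
    (∀ j, b j = vsign n j * ∑ i, lam i * y i * s i j) ∧
    (∀ i, lam i * (y i * netF w b (x i) - 1) = 0)

lemma vsign_pm (n : ℕ) (j : Fin n) : vsign n j = 1 ∨ vsign n j = -1 := by
  unfold vsign; split <;> simp

lemma relu_nonneg (z : ℝ) : 0 ≤ relu z := le_max_right z 0

lemma relu_sub_self_nonneg (z : ℝ) : 0 ≤ relu z - z := by
  have := le_max_left z 0; unfold relu; linarith

lemma quad_lower {m : ℕ} (ε : ℝ) (hε0 : 0 ≤ ε)
    (g : Fin m → Fin m → ℝ) (hg1 : ∀ k, g k k = 1)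
    (hgε : ∀ k k', k ≠ k' → |g k k'| ≤ ε) (c : Fin m → ℝ) :
    (1 - ε * m) * ∑ k, (c k)^2 ≤ ∑ k, ∑ k', c k * c k' * (g k' k + 1) := by
  have hsplit : ∑ k, ∑ k', c k * c k' * (g k' k + 1)
      = (∑ k, ∑ k', c k * c k' * g k' k) + (∑ k, c k)^2 := by
    rw [sq, Finset.sum_mul_sum, ← Finset.sum_add_distrib]
    refine Finset.sum_congr rfl fun k _ => ?_
    rw [← Finset.sum_add_distrib]
    exact Finset.sum_congr rfl fun k' _ => by ring
  have hdiag : ∀ k, (c k)^2 - |c k| * (ε * ∑ k', |c k'|) ≤ ∑ k', c k * c k' * g k' k := by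
    intro k
    have h1 : ∑ k', c k * c k' * g k' k
        = c k * c k * g k k + ∑ k' ∈ Finset.univ.erase k, c k * c k' * g k' k :=
      (Finset.add_sum_erase _ _ (Finset.mem_univ k)).symm
    have h2 : ∀ k' ∈ Finset.univ.erase k, -(|c k| * (ε * |c k'|)) ≤ c k * c k' * g k' k := by
      intro k' hk'
      have hne : k' ≠ k := Finset.ne_of_mem_erase hk'
      have hg := hgε k' k hne
      have habs : |c k * c k' * g k' k| ≤ |c k| * (ε * |c k'|) := by
        rw [abs_mul, abs_mul]
        nlinarith [abs_nonneg (c k), abs_nonneg (c k'), abs_nonneg (g k' k),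
          mul_le_mul_of_nonneg_left hg (mul_nonneg (abs_nonneg (c k)) (abs_nonneg (c k')))]
      linarith [neg_abs_le (c k * c k' * g k' k)]
    have h3 := Finset.sum_le_sum h2
    have h4 : ∑ k' ∈ Finset.univ.erase k, (|c k| * (ε * |c k'|))
        ≤ ∑ k', |c k| * (ε * |c k'|) :=
      Finset.sum_le_sum_of_subset_of_nonneg (Finset.erase_subset _ _)
        (fun k' _ _ => mul_nonneg (abs_nonneg _) (mul_nonneg hε0 (abs_nonneg _)))
    have h5 : ∑ k', |c k| * (ε * |c k'|) = |c k| * (ε * ∑ k', |c k'|) := by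
      rw [Finset.mul_sum, Finset.mul_sum]
    have h6 : ∑ k' ∈ Finset.univ.erase k, -(|c k| * (ε * |c k'|))
        = -∑ k' ∈ Finset.univ.erase k, (|c k| * (ε * |c k'|)) := by
      simp
    have h7 : c k * c k * g k k = (c k)^2 := by rw [hg1]; ring
    linarith [h1, h3, h4, h5, h6, h7]
  have hCS : (∑ k, |c k|)^2 ≤ (m : ℝ) * ∑ k, (c k)^2 := by
    have := sq_sum_le_card_mul_sum_sq (s := (Finset.univ : Finset (Fin m))) (f := fun k => |c k|)
    simpa [sq_abs] using this
  have h8 : ∑ k, ((c k)^2 - |c k| * (ε * ∑ k', |c k'|)) ≤ ∑ k, ∑ k', c k * c k' * g k' k :=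
    Finset.sum_le_sum fun k _ => hdiag k
  have h9 : ∑ k, ((c k)^2 - |c k| * (ε * ∑ k', |c k'|))
      = (∑ k, (c k)^2) - ε * (∑ k, |c k|)^2 := by
    rw [Finset.sum_sub_distrib]
    congr 1
    rw [← Finset.sum_mul]
    ring
  have h10 : ε * (∑ k, |c k|)^2 ≤ ε * ((m:ℝ) * ∑ k, (c k)^2) :=
    mul_le_mul_of_nonneg_left hCS hε0
  nlinarith [hsplit, h8, h9, h10, sq_nonneg (∑ k, c k)]

set_option maxHeartbeats 2000000 in
theorem aux_main {m n : ℕ} (ε : ℝ) (hε0 : 0 ≤ ε) (hε1 : ε ≤ 1)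
    (hεm : ε * m ≤ 1/2) (hεS : 3 * ε * n * (2 * m) ≤ 5/4)
    (g : Fin m → Fin m → ℝ) (hg1 : ∀ k, g k k = 1)
    (hgε : ∀ k k', k ≠ k' → |g k k'| ≤ ε)
    (y lam : Fin m → ℝ) (hy : ∀ k, y k = 1 ∨ y k = -1) (hlam0 : ∀ k, 0 ≤ lam k)
    (s : Fin m → Fin n → ℝ) (hs01 : ∀ k j, s k j ∈ Set.Icc (0:ℝ) 1)
    (z : Fin m → Fin n → ℝ)
    (hz : ∀ k j, z k j = vsign n j * ∑ k', lam k' * y k' * s k' j * (g k' k + 1))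
    (hs1 : ∀ k j, 0 < z k j → s k j = 1)
    (hs0 : ∀ k j, z k j < 0 → s k j = 0)
    (hcs : ∀ k, lam k * (y k * (∑ j, vsign n j * relu (z k j)) - 1) = 0)
    (hbias : ∑ k, lam k * y k * (∑ j, s k j) ≤ 1/4) :
    ∀ i0, y i0 = -1 → lam i0 ≤ 5/2 := by
  intro i0 hyi0
  rcases (hlam0 i0).eq_or_lt with h0 | hpos
  · rw [← h0]; norm_num
  have hm : 0 < m := i0.pos
  have hs0' : ∀ k j, 0 ≤ s k j := fun k j => (hs01 k j).1
  have hs1' : ∀ k j, s k j ≤ 1 := fun k j => (hs01 k j).2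
  have hrelu : ∀ k j, relu (z k j) = s k j * z k j := by
    intro k j
    rcases lt_trichotomy (z k j) 0 with h | h | h
    · simp [relu, max_eq_right h.le, hs0 k j h]
    · simp [relu, h]
    · simp [relu, max_eq_left h.le, hs1 k j h]
  -- network value expansion
  have hN : ∀ k, (∑ j, vsign n j * relu (z k j))
      = ∑ k', lam k' * y k' * ((g k' k + 1) * (∑ j, s k j * s k' j)) := by
    intro k
    have h1 : ∀ j, vsign n j * relu (z k j)
        = ∑ k', s k j * (lam k' * y k' * s k' j * (g k' k + 1)) := by
      intro j
      rw [hrelu k j, hz k j, ← Finset.mul_sum]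
      rcases vsign_pm n j with h | h <;> rw [h] <;> ring
    calc (∑ j, vsign n j * relu (z k j))
        = ∑ j, ∑ k', s k j * (lam k' * y k' * s k' j * (g k' k + 1)) :=
          Finset.sum_congr rfl (fun j _ => h1 j)
      _ = ∑ k', ∑ j, s k j * (lam k' * y k' * s k' j * (g k' k + 1)) := Finset.sum_comm
      _ = ∑ k', lam k' * y k' * ((g k' k + 1) * (∑ j, s k j * s k' j)) := by
          refine Finset.sum_congr rfl (fun k' _ => ?_)
          rw [Finset.mul_sum, Finset.mul_sum]
          exact Finset.sum_congr rfl (fun j _ => by ring)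
  have hS0 : ∀ k, 0 ≤ ∑ j, s k j :=
    fun k => Finset.sum_nonneg fun j _ => hs0' k j
  have hSn : ∀ k, (∑ j, s k j) ≤ n := by
    intro k
    calc (∑ j, s k j) ≤ ∑ _j : Fin n, (1:ℝ) := Finset.sum_le_sum fun j _ => hs1' k j
    _ = n := by simp
  have hyN : ∀ k, 0 < lam k → y k * (∑ j, vsign n j * relu (z k j)) = 1 := by
    intro k hk
    rcases mul_eq_zero.mp (hcs k) with h | h
    · exact absurd h hk.ne'
    · linarith [h]
  have hR1 : ∀ k, 0 < lam k → 1 ≤ ∑ j, s k j * s k j := by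
    intro k hk
    have h2 := hyN k hk
    have h3 : y k * (∑ j, vsign n j * relu (z k j)) ≤ ∑ j, relu (z k j) := by
      rw [Finset.mul_sum]
      refine Finset.sum_le_sum fun j _ => ?_
      have h5 : y k * vsign n j ≤ 1 := by
        rcases hy k with h | h <;> rcases vsign_pm n j with h' | h' <;> rw [h, h'] <;> norm_num
      nlinarith [relu_nonneg (z k j)]
    have h1 : (1:ℝ) ≤ ∑ j, relu (z k j) := by linarith
    have h6 : ∃ j, 0 < relu (z k j) := by
      by_contra hno
      push_neg at hno
      have : (∑ j, relu (z k j)) ≤ 0 := Finset.sum_nonpos fun j _ => hno j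
      linarith
    obtain ⟨j, hj⟩ := h6
    have hzj : 0 < z k j := by
      by_contra hle
      push_neg at hle
      simp [relu, max_eq_right hle] at hj
    have hsj := hs1 k j hzj
    calc (1:ℝ) = s k j * s k j := by rw [hsj]; norm_num
    _ ≤ ∑ j, s k j * s k j :=
        Finset.single_le_sum (f := fun j => s k j * s k j)
          (fun j _ => mul_nonneg (hs0' k j) (hs0' k j)) (Finset.mem_univ j)
  -- global bound on sum of multipliers
  have hLam0 : 0 ≤ ∑ k, lam k := Finset.sum_nonneg fun k _ => hlam0 k
  have hQ : ∑ k, lam k = ∑ k, lam k * (y k * (∑ j, vsign n j * relu (z k j))) := by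
    refine Finset.sum_congr rfl fun k _ => ?_
    linear_combination - hcs k
  have lhs_eq : ∀ k, lam k * (y k * (∑ j, vsign n j * relu (z k j)))
      = ∑ k', ∑ j, (lam k * y k * s k j) * (lam k' * y k' * s k' j) * (g k' k + 1) := by
    intro k
    rw [hN k]
    simp only [Finset.mul_sum]
    refine Finset.sum_congr rfl fun k' _ => ?_
    refine Finset.sum_congr rfl fun j _ => ?_
    ring
  have hQ2 : ∑ k, lam k
      = ∑ j, ∑ k, ∑ k', (lam k * y k * s k j) * (lam k' * y k' * s k' j) * (g k' k + 1) := by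
    rw [hQ]
    calc ∑ k, lam k * (y k * (∑ j, vsign n j * relu (z k j)))
        = ∑ k, ∑ k', ∑ j, (lam k * y k * s k j) * (lam k' * y k' * s k' j) * (g k' k + 1) :=
          Finset.sum_congr rfl fun k _ => lhs_eq k
      _ = ∑ k, ∑ j, ∑ k', (lam k * y k * s k j) * (lam k' * y k' * s k' j) * (g k' k + 1) :=
          Finset.sum_congr rfl fun k _ => Finset.sum_comm
      _ = ∑ j, ∑ k, ∑ k', (lam k * y k * s k j) * (lam k' * y k' * s k' j) * (g k' k + 1) :=
          Finset.sum_comm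
  have hLam2 : ∑ k, (lam k)^2 ≤ 2 * ∑ k, lam k := by
    have h1 : ∀ j : Fin n, (1 - ε * m) * ∑ k, (lam k * s k j)^2
        ≤ ∑ k, ∑ k', (lam k * y k * s k j) * (lam k' * y k' * s k' j) * (g k' k + 1) := by
      intro j
      have hql := quad_lower ε hε0 g hg1 hgε (fun k => lam k * y k * s k j)
      have heq : ∑ k, (lam k * y k * s k j)^2 = ∑ k, (lam k * s k j)^2 :=
        Finset.sum_congr rfl fun k _ => by rcases hy k with h | h <;> rw [h] <;> ring
      rw [heq] at hql
      exact hql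
    have h2 : (1 - ε * m) * ∑ j, ∑ k, (lam k * s k j)^2 ≤ ∑ k, lam k := by
      rw [hQ2, Finset.mul_sum]
      exact Finset.sum_le_sum fun j _ => h1 j
    have h3 : ∑ k, (lam k)^2 ≤ ∑ j, ∑ k, (lam k * s k j)^2 := by
      rw [Finset.sum_comm]
      refine Finset.sum_le_sum fun k _ => ?_
      rcases (hlam0 k).eq_or_lt with h | h
      · rw [← h]
        simp
      · calc (lam k)^2 = (lam k)^2 * 1 := by ring
        _ ≤ (lam k)^2 * ∑ j, s k j * s k j :=
            mul_le_mul_of_nonneg_left (hR1 k h) (sq_nonneg _)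
        _ = ∑ j, (lam k * s k j)^2 := by
            rw [Finset.mul_sum]
            exact Finset.sum_congr rfl fun j _ => by ring
    have h4 : (1 - ε * m) * ∑ k, (lam k)^2 ≤ (1 - ε * m) * ∑ j, ∑ k, (lam k * s k j)^2 :=
      mul_le_mul_of_nonneg_left h3 (by linarith)
    have h5 : 0 ≤ ∑ k, (lam k)^2 := Finset.sum_nonneg fun k _ => sq_nonneg _
    have h6 : (ε * m) * ∑ k, (lam k)^2 ≤ (1/2) * ∑ k, (lam k)^2 :=
      mul_le_mul_of_nonneg_right hεm h5
    nlinarith [h4, h2, h5, h6]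
  have hLam2m : ∑ k, lam k ≤ 2 * m := by
    have hCS2 : (∑ k, lam k)^2 ≤ (m:ℝ) * ∑ k, (lam k)^2 := by
      have := sq_sum_le_card_mul_sum_sq (s := (Finset.univ : Finset (Fin m))) (f := lam)
      simpa using this
    have hmr : (1:ℝ) ≤ m := by exact_mod_cast hm
    nlinarith [hLam0, hLam2, hCS2, hmr]
  -- main part
  have hNi0 : (∑ j, vsign n j * relu (z i0 j)) = -1 := by
    have h := hyN i0 hpos
    rw [hyi0] at h
    linarith
  have hD : ∑ j, vsign n j * z i0 j
      = ∑ k, lam k * y k * ((∑ j, s k j) * (g k i0 + 1)) := by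
    have h1 : ∀ j, vsign n j * z i0 j = ∑ k, lam k * y k * s k j * (g k i0 + 1) := by
      intro j
      rw [hz i0 j]
      rcases vsign_pm n j with h | h <;> rw [h] <;> ring
    calc ∑ j, vsign n j * z i0 j
        = ∑ j, ∑ k, lam k * y k * s k j * (g k i0 + 1) :=
          Finset.sum_congr rfl fun j _ => h1 j
      _ = ∑ k, ∑ j, lam k * y k * s k j * (g k i0 + 1) := Finset.sum_comm
      _ = ∑ k, lam k * y k * ((∑ j, s k j) * (g k i0 + 1)) := by
          refine Finset.sum_congr rfl fun k _ => ?_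
          rw [Finset.sum_mul, Finset.mul_sum]
          exact Finset.sum_congr rfl fun j _ => by ring
  have hg_sum : ∑ k, lam k * y k * ((∑ j, s k j) * g k i0)
      ≤ -(lam i0 * (∑ j, s i0 j)) + ε * ∑ k, lam k * (∑ j, s k j) := by
    rw [← Finset.add_sum_erase _ _ (Finset.mem_univ i0)]
    have h1 : ∑ k ∈ Finset.univ.erase i0, lam k * y k * ((∑ j, s k j) * g k i0)
        ≤ ∑ k ∈ Finset.univ.erase i0, ε * (lam k * (∑ j, s k j)) := by
      refine Finset.sum_le_sum fun k hk => ?_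
      have hne : k ≠ i0 := Finset.ne_of_mem_erase hk
      have hb := hgε k i0 hne
      have hLS : 0 ≤ lam k * (∑ j, s k j) := mul_nonneg (hlam0 k) (hS0 k)
      have hy1 : |y k| = 1 := by rcases hy k with h | h <;> rw [h] <;> norm_num
      calc lam k * y k * ((∑ j, s k j) * g k i0)
          ≤ |lam k * y k * ((∑ j, s k j) * g k i0)| := le_abs_self _
        _ = (lam k * (∑ j, s k j)) * |g k i0| := by
            rw [abs_mul, abs_mul, abs_mul, hy1, abs_of_nonneg (hlam0 k),
              abs_of_nonneg (hS0 k)]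
            ring
        _ ≤ (lam k * (∑ j, s k j)) * ε := mul_le_mul_of_nonneg_left hb hLS
        _ = ε * (lam k * (∑ j, s k j)) := mul_comm _ _
    have h2 : ∑ k ∈ Finset.univ.erase i0, ε * (lam k * (∑ j, s k j))
        ≤ ∑ k, ε * (lam k * (∑ j, s k j)) :=
      Finset.sum_le_sum_of_subset_of_nonneg (Finset.erase_subset _ _)
        (fun k _ _ => mul_nonneg hε0 (mul_nonneg (hlam0 k) (hS0 k)))
    have h3 : ∑ k, ε * (lam k * (∑ j, s k j)) = ε * ∑ k, lam k * (∑ j, s k j) :=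
      (Finset.mul_sum _ _ _).symm
    have h4 : lam i0 * y i0 * ((∑ j, s i0 j) * g i0 i0) = -(lam i0 * (∑ j, s i0 j)) := by
      rw [hg1, hyi0]; ring
    linarith [h1, h2, h3, h4]
  have hM3 : lam i0 * (∑ j, s i0 j)
      ≤ (∑ k, lam k * y k * (∑ j, s k j)) - (∑ j, vsign n j * z i0 j)
        + ε * ∑ k, lam k * (∑ j, s k j) := by
    have hsplit : ∑ k, lam k * y k * ((∑ j, s k j) * (g k i0 + 1))
        = (∑ k, lam k * y k * (∑ j, s k j))
          + ∑ k, lam k * y k * ((∑ j, s k j) * g k i0) := by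
      rw [← Finset.sum_add_distrib]
      exact Finset.sum_congr rfl fun k _ => by ring
    rw [hD]
    linarith [hsplit, hg_sum]
  -- lower bound on the linear sum via the network value
  have hM5 : -(1:ℝ) - (∑ j ∈ Finset.univ.filter (fun j : Fin n => (j:ℕ) < n/2),
        (relu (z i0 j) - z i0 j)) ≤ ∑ j, vsign n j * z i0 j := by
    have h1 : ∑ j, vsign n j * z i0 j
        = (∑ j, vsign n j * relu (z i0 j)) - ∑ j, vsign n j * (relu (z i0 j) - z i0 j) := by
      rw [← Finset.sum_sub_distrib]
      exact Finset.sum_congr rfl fun j _ => by ring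
    rw [h1, hNi0]
    have h2 : ∑ j, vsign n j * (relu (z i0 j) - z i0 j)
        ≤ ∑ j ∈ Finset.univ.filter (fun j : Fin n => (j:ℕ) < n/2),
            (relu (z i0 j) - z i0 j) := by
      rw [← Finset.sum_filter_add_sum_filter_not Finset.univ (fun j : Fin n => (j:ℕ) < n/2)
        (fun j => vsign n j * (relu (z i0 j) - z i0 j))]
      have h3 : ∑ j ∈ Finset.univ.filter (fun j : Fin n => (j:ℕ) < n/2),
          vsign n j * (relu (z i0 j) - z i0 j)
          = ∑ j ∈ Finset.univ.filter (fun j : Fin n => (j:ℕ) < n/2),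
            (relu (z i0 j) - z i0 j) :=
        Finset.sum_congr rfl fun j hj => by
          rw [vsign, if_pos (Finset.mem_filter.mp hj).2, one_mul]
      have h4 : ∑ j ∈ Finset.univ.filter (fun j : Fin n => ¬ (j:ℕ) < n/2),
          vsign n j * (relu (z i0 j) - z i0 j) ≤ 0 :=
        Finset.sum_nonpos fun j hj => by
          rw [vsign, if_neg (Finset.mem_filter.mp hj).2]
          nlinarith [relu_sub_self_nonneg (z i0 j)]
      linarith [h3, h4]
    linarith [h2]
  -- key neuron-wise bound
  have key : ∀ j : Fin n, (j:ℕ) < n/2 → relu (z i0 j) - z i0 j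
      ≤ 4 * ε * (∑ k ∈ Finset.univ.filter (fun k => ¬ y k = 1), lam k * s k j) := by
    intro j hj
    have hNd0 : 0 ≤ ∑ k ∈ Finset.univ.filter (fun k => ¬ y k = 1), lam k * s k j :=
      Finset.sum_nonneg fun k _ => mul_nonneg (hlam0 k) (hs0' k j)
    have hPd0 : 0 ≤ ∑ k ∈ Finset.univ.filter (fun k => y k = 1), lam k * s k j :=
      Finset.sum_nonneg fun k _ => mul_nonneg (hlam0 k) (hs0' k j)
    rcases le_or_gt 0 (z i0 j) with hz0 | hz0
    · have hre : relu (z i0 j) = z i0 j := max_eq_left hz0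
      rw [hre]
      nlinarith [mul_nonneg (mul_nonneg (by norm_num : (0:ℝ) ≤ 4) hε0) hNd0]
    · have hsi0 : s i0 j = 0 := hs0 i0 j hz0
      have hre : relu (z i0 j) = 0 := max_eq_right hz0.le
      rw [hre]
      have hzeq : z i0 j = ∑ k, lam k * y k * s k j * (g k i0 + 1) := by
        rw [hz i0 j, vsign, if_pos hj, one_mul]
      have hlow : (1 - ε) * (∑ k ∈ Finset.univ.filter (fun k => y k = 1), lam k * s k j)
          - (1 + ε) * (∑ k ∈ Finset.univ.filter (fun k => ¬ y k = 1), lam k * s k j)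
          ≤ z i0 j := by
        rw [hzeq, ← Finset.sum_filter_add_sum_filter_not Finset.univ (fun k => y k = 1)
          (fun k => lam k * y k * s k j * (g k i0 + 1))]
        have hA : ∑ k ∈ Finset.univ.filter (fun k => y k = 1), (1 - ε) * (lam k * s k j)
            ≤ ∑ k ∈ Finset.univ.filter (fun k => y k = 1),
                lam k * y k * s k j * (g k i0 + 1) := by
          refine Finset.sum_le_sum fun k hk => ?_
          have hyk : y k = 1 := (Finset.mem_filter.mp hk).2
          have hne : k ≠ i0 := by
            intro h; rw [h, hyi0] at hyk; norm_num at hyk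
          have hgb := abs_le.mp (hgε k i0 hne)
          have hls : 0 ≤ lam k * s k j := mul_nonneg (hlam0 k) (hs0' k j)
          rw [hyk]
          nlinarith [hgb.1, hls]
        have hB : ∑ k ∈ Finset.univ.filter (fun k => ¬ y k = 1),
              (-(1 + ε)) * (lam k * s k j)
            ≤ ∑ k ∈ Finset.univ.filter (fun k => ¬ y k = 1),
                lam k * y k * s k j * (g k i0 + 1) := by
          refine Finset.sum_le_sum fun k hk => ?_
          have hyk : y k = -1 := (hy k).resolve_left (Finset.mem_filter.mp hk).2
          rw [hyk]
          rcases eq_or_ne k i0 with rfl | hne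
          · rw [hsi0]; simp
          · have hgb := abs_le.mp (hgε k i0 hne)
            have hls : 0 ≤ lam k * s k j := mul_nonneg (hlam0 k) (hs0' k j)
            nlinarith [hgb.2, hls]
        have hA' : ∑ k ∈ Finset.univ.filter (fun k => y k = 1), (1 - ε) * (lam k * s k j)
            = (1 - ε) * ∑ k ∈ Finset.univ.filter (fun k => y k = 1), lam k * s k j :=
          (Finset.mul_sum _ _ _).symm
        have hB' : ∑ k ∈ Finset.univ.filter (fun k => ¬ y k = 1),
              (-(1 + ε)) * (lam k * s k j)
            = -((1 + ε) * ∑ k ∈ Finset.univ.filter (fun k => ¬ y k = 1), lam k * s k j) := by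
          rw [← Finset.mul_sum]; ring
        linarith [hA, hB, hA', hB']
      rcases hNd0.eq_or_lt with hNd | hNd
      · have hz' : (1 + ε) * (∑ k ∈ Finset.univ.filter (fun k => ¬ y k = 1),
            lam k * s k j) = 0 := by rw [← hNd]; ring
        have h1 : 0 ≤ (1 - ε) * (∑ k ∈ Finset.univ.filter (fun k => y k = 1),
            lam k * s k j) := mul_nonneg (by linarith) hPd0
        linarith [hlow]
      · obtain ⟨k1, hk1mem, hk1⟩ : ∃ k ∈ Finset.univ.filter (fun k => ¬ y k = 1),
            0 < lam k * s k j := by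
          by_contra hno
          push_neg at hno
          have : (∑ k ∈ Finset.univ.filter (fun k => ¬ y k = 1), lam k * s k j) ≤ 0 :=
            Finset.sum_nonpos hno
          linarith
        have hyk1 : y k1 = -1 := (hy k1).resolve_left (Finset.mem_filter.mp hk1mem).2
        have hsk1 : 0 < s k1 j := by
          rcases (hs0' k1 j).eq_or_lt with h | h
          · rw [← h] at hk1; simp at hk1
          · exact h
        have hzk1 : 0 ≤ z k1 j := by
          by_contra hlt
          push_neg at hlt
          rw [hs0 k1 j hlt] at hsk1
          exact lt_irrefl 0 hsk1
        have hup : z k1 j ≤ (1 + ε) * (∑ k ∈ Finset.univ.filter (fun k => y k = 1),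
              lam k * s k j)
            - (1 - ε) * (∑ k ∈ Finset.univ.filter (fun k => ¬ y k = 1), lam k * s k j) := by
          have hzeq1 : z k1 j = ∑ k, lam k * y k * s k j * (g k k1 + 1) := by
            rw [hz k1 j, vsign, if_pos hj, one_mul]
          rw [hzeq1, ← Finset.sum_filter_add_sum_filter_not Finset.univ (fun k => y k = 1)
            (fun k => lam k * y k * s k j * (g k k1 + 1))]
          have hA : ∑ k ∈ Finset.univ.filter (fun k => y k = 1),
                lam k * y k * s k j * (g k k1 + 1)
              ≤ ∑ k ∈ Finset.univ.filter (fun k => y k = 1), (1 + ε) * (lam k * s k j) := by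
            refine Finset.sum_le_sum fun k hk => ?_
            have hyk : y k = 1 := (Finset.mem_filter.mp hk).2
            have hne : k ≠ k1 := by
              intro h; rw [h, hyk1] at hyk; norm_num at hyk
            have hgb := abs_le.mp (hgε k k1 hne)
            have hls : 0 ≤ lam k * s k j := mul_nonneg (hlam0 k) (hs0' k j)
            rw [hyk]
            nlinarith [hgb.2, hls]
          have hB : ∑ k ∈ Finset.univ.filter (fun k => ¬ y k = 1),
                lam k * y k * s k j * (g k k1 + 1)
              ≤ ∑ k ∈ Finset.univ.filter (fun k => ¬ y k = 1),
                  (-(1 - ε)) * (lam k * s k j) := by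
            refine Finset.sum_le_sum fun k hk => ?_
            have hyk : y k = -1 := (hy k).resolve_left (Finset.mem_filter.mp hk).2
            have hls : 0 ≤ lam k * s k j := mul_nonneg (hlam0 k) (hs0' k j)
            rw [hyk]
            rcases eq_or_ne k k1 with rfl | hne
            · rw [hg1]; nlinarith
            · have hgb := abs_le.mp (hgε k k1 hne)
              nlinarith [hgb.1]
          have hA' : ∑ k ∈ Finset.univ.filter (fun k => y k = 1), (1 + ε) * (lam k * s k j)
              = (1 + ε) * ∑ k ∈ Finset.univ.filter (fun k => y k = 1), lam k * s k j :=
            (Finset.mul_sum _ _ _).symm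
          have hB' : ∑ k ∈ Finset.univ.filter (fun k => ¬ y k = 1),
                (-(1 - ε)) * (lam k * s k j)
              = -((1 - ε) * ∑ k ∈ Finset.univ.filter (fun k => ¬ y k = 1),
                  lam k * s k j) := by
            rw [← Finset.mul_sum]; ring
          linarith [hA, hB, hA', hB']
        have e1 : (1 + ε) * (-(z i0 j))
            ≤ (1 + ε) * ((1 + ε) * (∑ k ∈ Finset.univ.filter (fun k => ¬ y k = 1),
                lam k * s k j)
              - (1 - ε) * (∑ k ∈ Finset.univ.filter (fun k => y k = 1), lam k * s k j)) :=
          mul_le_mul_of_nonneg_left (by linarith [hlow]) (by linarith)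
        have e2 : (1 - ε) * ((1 - ε) * (∑ k ∈ Finset.univ.filter (fun k => ¬ y k = 1),
              lam k * s k j))
            ≤ (1 - ε) * ((1 + ε) * (∑ k ∈ Finset.univ.filter (fun k => y k = 1),
              lam k * s k j)) :=
          mul_le_mul_of_nonneg_left (by linarith [hzk1, hup]) (by linarith)
        have e3 : 0 ≤ ε * (-(z i0 j)) := mul_nonneg hε0 (by linarith)
        nlinarith [e1, e2, e3]
  -- assembling
  have hNdLam : ∀ j : Fin n,
      (∑ k ∈ Finset.univ.filter (fun k => ¬ y k = 1), lam k * s k j) ≤ ∑ k, lam k := by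
    intro j
    calc (∑ k ∈ Finset.univ.filter (fun k => ¬ y k = 1), lam k * s k j)
        ≤ ∑ k ∈ Finset.univ.filter (fun k => ¬ y k = 1), lam k :=
          Finset.sum_le_sum fun k _ => mul_le_of_le_one_right (hlam0 k) (hs1' k j)
      _ ≤ ∑ k, lam k :=
          Finset.sum_le_sum_of_subset_of_nonneg (Finset.filter_subset _ _)
            (fun k _ _ => hlam0 k)
  have hcard : ((Finset.univ.filter (fun j : Fin n => (j:ℕ) < n/2)).card) ≤ n/2 := by
    have h := Finset.card_le_card_of_injOn
      (s := Finset.univ.filter (fun j : Fin n => (j:ℕ) < n/2))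
      (t := Finset.range (n/2)) (f := fun j : Fin n => (j : ℕ))
      (fun a ha => Finset.mem_range.mpr (Finset.mem_filter.mp ha).2)
      (fun a _ b _ h => Fin.val_injective h)
    simpa using h
  have hZ : ∑ j ∈ Finset.univ.filter (fun j : Fin n => (j:ℕ) < n/2),
      (relu (z i0 j) - z i0 j) ≤ 2 * ε * n * (∑ k, lam k) := by
    have s1 : ∑ j ∈ Finset.univ.filter (fun j : Fin n => (j:ℕ) < n/2),
        (relu (z i0 j) - z i0 j)
        ≤ ∑ j ∈ Finset.univ.filter (fun j : Fin n => (j:ℕ) < n/2),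
          4 * ε * (∑ k ∈ Finset.univ.filter (fun k => ¬ y k = 1), lam k * s k j) :=
      Finset.sum_le_sum fun j hj => key j (Finset.mem_filter.mp hj).2
    have s2 : ∑ j ∈ Finset.univ.filter (fun j : Fin n => (j:ℕ) < n/2),
          4 * ε * (∑ k ∈ Finset.univ.filter (fun k => ¬ y k = 1), lam k * s k j)
        ≤ ∑ j ∈ Finset.univ.filter (fun j : Fin n => (j:ℕ) < n/2),
          4 * ε * (∑ k, lam k) :=
      Finset.sum_le_sum fun j _ => mul_le_mul_of_nonneg_left (hNdLam j) (by positivity)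
    have s3 : ∑ j ∈ Finset.univ.filter (fun j : Fin n => (j:ℕ) < n/2),
          4 * ε * (∑ k, lam k)
        = ((Finset.univ.filter (fun j : Fin n => (j:ℕ) < n/2)).card : ℝ)
          * (4 * ε * (∑ k, lam k)) := by
      rw [Finset.sum_const, nsmul_eq_mul]
    have s4 : ((Finset.univ.filter (fun j : Fin n => (j:ℕ) < n/2)).card : ℝ)
        ≤ (n : ℝ)/2 := by
      have h1 : ((Finset.univ.filter (fun j : Fin n => (j:ℕ) < n/2)).card : ℝ)
          ≤ ((n/2 : ℕ) : ℝ) := by exact_mod_cast hcard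
      have h2 : ((n/2 : ℕ) : ℝ) ≤ (n : ℝ)/2 := Nat.cast_div_le
      linarith
    have s5 : ((Finset.univ.filter (fun j : Fin n => (j:ℕ) < n/2)).card : ℝ)
          * (4 * ε * (∑ k, lam k)) ≤ ((n:ℝ)/2) * (4 * ε * (∑ k, lam k)) :=
      mul_le_mul_of_nonneg_right s4 (by positivity)
    have s6 : ((n:ℝ)/2) * (4 * ε * (∑ k, lam k)) = 2 * ε * n * (∑ k, lam k) := by ring
    linarith [s1, s2, s3, s5, s6]
  have hSLam : ∑ k, lam k * (∑ j, s k j) ≤ (n:ℝ) * ∑ k, lam k := by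
    calc ∑ k, lam k * (∑ j, s k j) ≤ ∑ k, lam k * n :=
      Finset.sum_le_sum fun k _ => mul_le_mul_of_nonneg_left (hSn k) (hlam0 k)
    _ = (n:ℝ) * ∑ k, lam k := by rw [← Finset.sum_mul]; ring
    
  have hSi0 : 1 ≤ ∑ j, s i0 j := by
    have h1 := hR1 i0 hpos
    have h2 : ∑ j, s i0 j * s i0 j ≤ ∑ j, s i0 j :=
      Finset.sum_le_sum fun j _ => by nlinarith [hs0' i0 j, hs1' i0 j]
    linarith
  have hεSL : ε * (∑ k, lam k * (∑ j, s k j)) ≤ ε * ((n:ℝ) * ∑ k, lam k) :=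
    mul_le_mul_of_nonneg_left hSLam hε0
  have h3n : 3 * ε * (n:ℝ) * (∑ k, lam k) ≤ 5/4 := by
    have := mul_le_mul_of_nonneg_left hLam2m
      (show (0:ℝ) ≤ 3 * ε * (n:ℝ) by positivity)
    calc 3 * ε * (n:ℝ) * (∑ k, lam k) ≤ 3 * ε * (n:ℝ) * (2 * m) := this
    _ ≤ 5/4 := hεS
  have hfinal : lam i0 * (∑ j, s i0 j) ≤ 5/2 := by
    nlinarith [hM3, hbias, hM5, hZ, hεSL, h3n]
  nlinarith [hfinal, hSi0, hpos.le, mul_le_mul_of_nonneg_left hSi0 hpos.le]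

set_option maxHeartbeats 2000000 in
/-- Lemma B.8: if the bias contribution is small then the multipliers of negative
samples are bounded above by 5/2. -/
theorem stmt17 {d m n : ℕ} (δ : ℝ) (hδ0 : 0 < δ) (hδ1 : δ < 1)
    (hn : Even n)
    (x : Fin m → EuclideanSpace ℝ (Fin d)) (y : Fin m → ℝ)
    (hx : ∀ i, ‖x i‖ = 1)
    (hy : ∀ i, y i = 1 ∨ y i = -1)
    (horth : ∀ i j, i ≠ j →
      |(inner ℝ (x i) (x j) : ℝ)| ≤ Real.sqrt (2 * Real.log (2 * (m : ℝ) ^ 2 / δ) / d))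
    (hd : 16 * (m : ℝ) ^ 4 * (n : ℝ) ^ 4 * Real.log (2 * (m : ℝ) ^ 2 / δ) ≤ (d : ℝ))
    (w : Fin n → EuclideanSpace ℝ (Fin d)) (b : Fin n → ℝ) (lam : Fin m → ℝ)
    (hkkt : IsKKTFixWith x y w b lam)
    (hbias : (∑ j ∈ Finset.univ.filter (fun j : Fin n => (j : ℕ) < n / 2), b j) -
        (∑ j ∈ Finset.univ.filter (fun j : Fin n => n / 2 ≤ (j : ℕ)), b j) ≤ 1 / 4) :
    ∀ i, y i = -1 → lam i ≤ 5 / 2 := by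

  intro i0 hyi0
  obtain ⟨hmargin, hlam0, s, hs01, hs1, hs0, hw, hb, hcs⟩ := hkkt
  rcases Nat.eq_zero_or_pos n with hn0 | hnpos
  · subst hn0
    have h := hmargin i0
    simp [netF] at h
    linarith
  have hn2 : 2 ≤ n := by
    rcases hn with ⟨t, ht⟩
    omega
  have hm1 : 1 ≤ m := i0.pos
  have hmr : (1:ℝ) ≤ m := by exact_mod_cast hm1
  have hnr : (2:ℝ) ≤ n := by exact_mod_cast hn2
  set ε := Real.sqrt (2 * Real.log (2 * (m : ℝ) ^ 2 / δ) / d) with hεdef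
  have hε0 : 0 ≤ ε := Real.sqrt_nonneg _
  have hL : 0 < Real.log (2 * (m : ℝ) ^ 2 / δ) := by
    apply Real.log_pos
    rw [lt_div_iff₀ hδ0]
    nlinarith
  have hm2 : (1:ℝ) ≤ (m:ℝ)^2 := by nlinarith [hmr]
  have hn2s : (4:ℝ) ≤ (n:ℝ)^2 := by nlinarith [hnr]
  have hm4 : (1:ℝ) ≤ (m:ℝ)^4 := by nlinarith [hm2]
  have hn4 : (16:ℝ) ≤ (n:ℝ)^4 := by nlinarith [hn2s]
  have hMn : (16:ℝ) ≤ (m:ℝ)^4*(n:ℝ)^4 := by nlinarith [hm4, hn4]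
  have hd0 : (0:ℝ) < d := by
    have hprod : 0 < (m:ℝ)^4*(n:ℝ)^4*Real.log (2 * (m : ℝ) ^ 2 / δ) :=
      mul_pos (by linarith) hL
    nlinarith [hd, hprod]
  have hε2 : ε^2 ≤ 1/(8 * (m:ℝ)^4 * (n:ℝ)^4) := by
    rw [hεdef, Real.sq_sqrt (div_nonneg (by linarith) hd0.le)]
    rw [div_le_div_iff₀ hd0 (by linarith : (0:ℝ) < 8 * (m:ℝ)^4 * (n:ℝ)^4)]
    nlinarith [hd]
  have ht2 : (ε * ((m:ℝ)^2 * (n:ℝ)^2))^2 ≤ 1/8 := by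
    have h1 : ε^2 * ((m:ℝ)^4 * (n:ℝ)^4)
        ≤ (1/(8 * (m:ℝ)^4 * (n:ℝ)^4)) * ((m:ℝ)^4*(n:ℝ)^4) :=
      mul_le_mul_of_nonneg_right hε2 (by linarith)
    have h2 : (1/(8 * (m:ℝ)^4 * (n:ℝ)^4)) * ((m:ℝ)^4*(n:ℝ)^4) = 1/8 := by
      field_simp
    nlinarith [h1]
  have ht : ε * ((m:ℝ)^2*(n:ℝ)^2) ≤ 3/8 := by
    nlinarith [ht2, sq_nonneg (ε * ((m:ℝ)^2*(n:ℝ)^2) - 1/2)]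
  have hε1 : ε ≤ 1 := by
    have h1 : (1:ℝ) ≤ (m:ℝ)^2*(n:ℝ)^2 := by nlinarith [hm2, hn2s]
    nlinarith [mul_le_mul_of_nonneg_left h1 hε0, ht]
  have hεm : ε * (m:ℝ) ≤ 1/2 := by
    have ha : (0:ℝ) ≤ (m:ℝ)^2 * ((n:ℝ)^2 - 4) :=
      mul_nonneg (by nlinarith [hmr]) (by linarith)
    have hb2 : (0:ℝ) ≤ (m:ℝ) * ((m:ℝ) - 1) :=
      mul_nonneg (by linarith) (by linarith)
    have h1 : (m:ℝ) ≤ (m:ℝ)^2*(n:ℝ)^2 := by nlinarith [ha, hb2]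
    nlinarith [mul_le_mul_of_nonneg_left h1 hε0, ht]
  have hεS : 3 * ε * (n:ℝ) * (2 * (m:ℝ)) ≤ 5/4 := by
    have hu0 : 0 ≤ ε * (m:ℝ) * (n:ℝ) :=
      mul_nonneg (mul_nonneg hε0 (by linarith)) (by linarith)
    have h0mn : (0:ℝ) ≤ ((m:ℝ)-1)*(n:ℝ) := mul_nonneg (by linarith) (by linarith)
    have hu2 : (2:ℝ) ≤ (m:ℝ)*(n:ℝ) := by nlinarith [h0mn]
    nlinarith [ht, hu0, mul_nonneg hu0 (show (0:ℝ) ≤ (m:ℝ)*(n:ℝ) - 2 by linarith)]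
  -- bridge to abstract lemma
  have hzeq : ∀ (k : Fin m) (j : Fin n), (inner ℝ (w j) (x k) : ℝ) + b j
      = vsign n j * ∑ k', lam k' * y k' * s k' j * ((inner ℝ (x k') (x k) : ℝ) + 1) := by
    intro k j
    rw [hw j, hb j, real_inner_smul_left, sum_inner]
    simp_rw [real_inner_smul_left]
    rw [← mul_add, ← Finset.sum_add_distrib]
    congr 1
    exact Finset.sum_congr rfl fun k' _ => by ring
  have hg1 : ∀ k : Fin m, (inner ℝ (x k) (x k) : ℝ) = 1 := by
    intro k
    rw [real_inner_self_eq_norm_sq, hx k]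
    norm_num
  have hbias' : ∑ k, lam k * y k * (∑ j, s k j) ≤ 1/4 := by
    have h1 : ∑ j, vsign n j * b j = ∑ k, lam k * y k * (∑ j, s k j) := by
      calc ∑ j, vsign n j * b j = ∑ j, ∑ k, lam k * y k * s k j := by
            refine Finset.sum_congr rfl fun j _ => ?_
            rw [hb j]
            rcases vsign_pm n j with h | h <;> rw [h] <;> ring
        _ = ∑ k, ∑ j, lam k * y k * s k j := Finset.sum_comm
        _ = ∑ k, lam k * y k * (∑ j, s k j) :=
            Finset.sum_congr rfl fun k _ => by rw [Finset.mul_sum]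
    have e3 : Finset.univ.filter (fun j : Fin n => ¬ (j:ℕ) < n/2)
        = Finset.univ.filter (fun j : Fin n => n/2 ≤ (j:ℕ)) := by
      apply Finset.filter_congr
      intro j _
      simp [not_lt]
    have h2 : ∑ j, vsign n j * b j
        = (∑ j ∈ Finset.univ.filter (fun j : Fin n => (j:ℕ) < n/2), b j)
          - (∑ j ∈ Finset.univ.filter (fun j : Fin n => n/2 ≤ (j:ℕ)), b j) := by
      rw [← Finset.sum_filter_add_sum_filter_not Finset.univ (fun j : Fin n => (j:ℕ) < n/2)
        (fun j => vsign n j * b j)]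
      have e1 : ∑ j ∈ Finset.univ.filter (fun j : Fin n => (j:ℕ) < n/2), vsign n j * b j
          = ∑ j ∈ Finset.univ.filter (fun j : Fin n => (j:ℕ) < n/2), b j :=
        Finset.sum_congr rfl fun j hj => by
          rw [vsign, if_pos (Finset.mem_filter.mp hj).2, one_mul]
      have e2 : ∑ j ∈ Finset.univ.filter (fun j : Fin n => ¬ (j:ℕ) < n/2), vsign n j * b j
          = -∑ j ∈ Finset.univ.filter (fun j : Fin n => ¬ (j:ℕ) < n/2), b j := by
        rw [← Finset.sum_neg_distrib]
        exact Finset.sum_congr rfl fun j hj => by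
          rw [vsign, if_neg (Finset.mem_filter.mp hj).2]; ring
      rw [e1, e2, e3]
      ring
    linarith [h1, h2, hbias]
  have hcs' : ∀ k, lam k * (y k * (∑ j, vsign n j *
      relu ((inner ℝ (w j) (x k) : ℝ) + b j)) - 1) = 0 := by
    intro k
    have := hcs k
    simpa [netF] using this
  exact aux_main ε hε0 hε1 hεm hεS
    (fun k k' => (inner ℝ (x k) (x k') : ℝ)) hg1 horth y lam hy hlam0 s hs01
    (fun k j => (inner ℝ (w j) (x k) : ℝ) + b j) hzeq hs1 hs0 hcs' hbias' i0 hyi0
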